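/- A gap-free law L in a game (A, Δ, P) is minimal if and only if all of the following are true: (1) if L is a vertex cover of the hypergraph (⋃Δ, S(P)), then L is a minimal vertex cover of this hypergraph; (2) for each agent a ∈ A and each safable action d ∈ Δ_a^L, if L is a vertex cover of the hypergraph H^{a,d}, then L is a minimal vertex cover of this hypergraph; (3) for each agent a ∈ A and each safable action d ∈ Δ_a ∩ L, the set L \ {d} is not a vertex cover of the hypergraph H^{a,d}. -/

import Mathlib

/-!
Under a law `C`, the profiles prohibited in the law-imposed game are those of `P` whose support
misses `C`, so `d` is a safe action of `a` there iff `d ∈ Δ_a \ C` and `C` meets every edge of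
`H^{a,d}`. A law is gap-free iff it meets every support in `S(P)` or some agent has such a safe
action: that agent is counterfactually responsible wherever nobody is legally responsible. Hence a
strict subset of `L` is gap-free iff it is a hitting set of `S(P)`, or of `H^{a,d}` for a safable
`d ∈ Δ_a` outside it. Conditions (1)–(3) exclude exactly these; for `d ∈ L` it suffices to test
`L \ {d}`, since hitting sets are upward closed.
-/

namespace MAS

variable {A α : Type*}

/-- The set of profiles of an action family `Δ`: functions assigning to each
agent `a` an action in `Δ a`. -/
def Profiles (Δ : A → Set α) : Set (A → α) := {δ | ∀ a, δ a ∈ Δ a}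

/-- The support set `S(δ)` of a profile `δ`. -/
def supp (δ : A → α) : Set α := Set.range δ

/-- A law in the game: a set of actions `L ⊆ ⋃ a, Δ a`. -/
def IsLaw (Δ : A → Set α) (L : Set α) : Prop := L ⊆ ⋃ a, Δ a

/-- The law-imposed action sets `Δ_a^L = Δ_a \ L`. -/
def lawActions (Δ : A → Set α) (L : Set α) : A → Set α := fun a => Δ a \ L

/-- The law-imposed prohibition `P^L = P ∩ ∏ Δ^L`. -/
def lawProhib (Δ : A → Set α) (P : Set (A → α)) (L : Set α) : Set (A → α) :=
  P ∩ Profiles (lawActions Δ L)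

/-- A law `L` is useful if `P^L = ∅` in the law-imposed game. -/
def Useful (Δ : A → Set α) (P : Set (A → α)) (L : Set α) : Prop :=
  lawProhib Δ P L = ∅

/-- An action `d` is a safe action of agent `a` in the game `(A, Δ, P)` if
`d ∈ Δ a` and `δ a ≠ d` for every prohibited profile `δ ∈ P`. -/
def SafeAction (Δ : A → Set α) (P : Set (A → α)) (a : A) (d : α) : Prop :=
  d ∈ Δ a ∧ ∀ δ ∈ P, δ a ≠ d

/-- In a prohibited profile `δ ∈ P`, agent `a` is responsible under law `L` if
`δ a ∈ L` (legally), or `S(δ) ∩ L = ∅` and a safe action of agent `a` exists in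
the law-imposed game (counterfactually). -/
def Responsible (Δ : A → Set α) (P : Set (A → α)) (L : Set α) (δ : A → α) (a : A) : Prop :=
  δ a ∈ L ∨ (supp δ ∩ L = ∅ ∧ ∃ d, SafeAction (lawActions Δ L) (lawProhib Δ P L) a d)

/-- A law `L` is gap-free if in each prohibited profile there is at least one
responsible agent. -/
def GapFree (Δ : A → Set α) (P : Set (A → α)) (L : Set α) : Prop :=
  ∀ δ ∈ P, ∃ a, Responsible Δ P L δ a

/-- An action `d` is safable if there is a law `L` and an agent `a` such that
`d` is a safe action of agent `a` in the law-imposed game. -/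
def Safable (Δ : A → Set α) (P : Set (A → α)) (d : α) : Prop :=
  ∃ L, IsLaw Δ L ∧ ∃ a, SafeAction (lawActions Δ L) (lawProhib Δ P L) a d

/-- `C` is a vertex cover of the hypergraph `(V, E)`. -/
def IsVC (V : Set α) (E : Set (Set α)) (C : Set α) : Prop :=
  C ⊆ V ∧ ∀ e ∈ E, (C ∩ e).Nonempty

/-- A minimal vertex cover. -/
def MinimalVC (V : Set α) (E : Set (Set α)) (C : Set α) : Prop :=
  IsVC V E C ∧ ∀ C', C' ⊂ C → ¬ IsVC V E C'

/-- A minimal gap-free law: a gap-free law no strict subset of which is gap-free. -/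
def MinimalGapFree (Δ : A → Set α) (P : Set (A → α)) (L : Set α) : Prop :=
  GapFree Δ P L ∧ ∀ L', L' ⊂ L → ¬ GapFree Δ P L'

/-- `S(P) = {S(δ) : δ ∈ P}`. -/
def suppSet (P : Set (A → α)) : Set (Set α) := (fun δ => supp δ) '' P

/-- The edge set `E^C = {C ∩ e : e ∈ E}` of the induced subgraph. -/
def inducedEdges (E : Set (Set α)) (C : Set α) : Set (Set α) := (fun e => C ∩ e) '' E

/-- The vertex set `(⋃ Δ) \ {d}` of the hypergraph `H^{a,d}`. -/
def Hvertices (Δ : A → Set α) (d : α) : Set α := (⋃ a, Δ a) \ {d}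

/-- The edge set `{S(δ) \ {d} : δ ∈ P, δ a = d}` of the hypergraph `H^{a,d}`. -/
def Hedges (P : Set (A → α)) (a : A) (d : α) : Set (Set α) :=
  (fun δ => supp δ \ {d}) '' {δ ∈ P | δ a = d}

def IsHittingSet (E : Set (Set α)) (C : Set α) : Prop := ∀ e ∈ E, (C ∩ e).Nonempty

theorem IsHittingSet.mono {E : Set (Set α)} {C C' : Set α} (h : C ⊆ C') (hC : IsHittingSet E C) :
    IsHittingSet E C' :=
  fun e he => (hC e he).mono (Set.inter_subset_inter_left e h)

theorem isVC_imp_minimalVC_iff {V : Set α} {E : Set (Set α)} {L : Set α} (hLV : L ⊆ V) :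
    (IsVC V E L → MinimalVC V E L) ↔ ∀ C ⊂ L, ¬ IsHittingSet E C := by
  constructor
  · intro hmin C hC hCE
    exact (hmin ⟨hLV, hCE.mono hC.subset⟩).2 C hC ⟨hC.subset.trans hLV, hCE⟩
  · exact fun hno hvc => ⟨hvc, fun C hC hCvc => hno C hC hCvc.2⟩

section Game

variable {Δ : A → Set α} {P : Set (A → α)} {L : Set α} {a : A} {d : α}

theorem supp_inter_eq_empty_iff {δ : A → α} : supp δ ∩ L = ∅ ↔ ∀ b, δ b ∉ L := by
  simp [supp, Set.eq_empty_iff_forall_notMem]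

theorem mem_lawProhib_iff (hP : P ⊆ Profiles Δ) {δ : A → α} :
    δ ∈ lawProhib Δ P L ↔ δ ∈ P ∧ supp δ ∩ L = ∅ := by
  rw [supp_inter_eq_empty_iff]
  exact ⟨fun ⟨hδ, hδL⟩ => ⟨hδ, fun b => (hδL b).2⟩,
    fun ⟨hδ, hδL⟩ => ⟨hδ, fun b => ⟨hP hδ b, hδL b⟩⟩⟩

theorem safeAction_lawActions_iff (hP : P ⊆ Profiles Δ) :
    SafeAction (lawActions Δ L) (lawProhib Δ P L) a d ↔
      d ∈ Δ a ∧ d ∉ L ∧ IsHittingSet (Hedges P a d) L := by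
  simp only [SafeAction, lawActions, Set.mem_sdiff, and_assoc]
  refine and_congr_right fun _ => and_congr_right fun hdL => ?_
  have hmeet (δ : A → α) : (L ∩ (supp δ \ {d})).Nonempty ↔ ¬ supp δ ∩ L = ∅ := by
    rw [← ne_eq, ← Set.nonempty_iff_ne_empty, Set.inter_comm (supp δ), ← Set.inter_sdiff_assoc,
      Set.sdiff_singleton_eq_self fun h => hdL h.1]
  simp only [IsHittingSet, Hedges, Set.forall_mem_image, Set.mem_ofPred_eq, and_imp, hmeet,
    mem_lawProhib_iff hP]
  grind

theorem gapFree_iff :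
    GapFree Δ P L ↔
      IsHittingSet (suppSet P) L ∨ ∃ a d, SafeAction (lawActions Δ L) (lawProhib Δ P L) a d := by
  constructor
  · intro hgf
    refine or_iff_not_imp_left.2 fun hnot => ?_
    obtain ⟨_, ⟨δ, hδ, rfl⟩, hδL⟩ : ∃ e ∈ suppSet P, ¬ (L ∩ e).Nonempty := by
      simpa [IsHittingSet] using hnot
    obtain ⟨a, hδa | ⟨-, d, hsafe⟩⟩ := hgf δ hδ
    · exact absurd ⟨δ a, hδa, a, rfl⟩ hδL
    · exact ⟨a, d, hsafe⟩
  · rintro (hL | ⟨a, d, hsafe⟩) δ hδ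
    · obtain ⟨_, hδbL, b, rfl⟩ := hL _ ⟨δ, hδ, rfl⟩
      exact ⟨b, .inl hδbL⟩
    · by_cases hδL : supp δ ∩ L = ∅
      · exact ⟨a, .inr ⟨hδL, d, hsafe⟩⟩
      · obtain ⟨b, hδbL⟩ := not_forall_not.1 (mt supp_inter_eq_empty_iff.2 hδL)
        exact ⟨b, .inl hδbL⟩

end Game

theorem minimalGapFree_iff_general {A α : Type*} (Δ : A → Set α) (P : Set (A → α))
    (hP : P ⊆ Profiles Δ) (L : Set α) (hL : IsLaw Δ L) (hgf : GapFree Δ P L) :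
    MinimalGapFree Δ P L ↔
      ((IsVC (⋃ a, Δ a) (suppSet P) L → MinimalVC (⋃ a, Δ a) (suppSet P) L) ∧
        (∀ a, ∀ d ∈ lawActions Δ L a, Safable Δ P d →
          IsVC (Hvertices Δ d) (Hedges P a d) L →
            MinimalVC (Hvertices Δ d) (Hedges P a d) L) ∧
        (∀ a, ∀ d ∈ Δ a ∩ L, Safable Δ P d →
          ¬ IsVC (Hvertices Δ d) (Hedges P a d) (L \ {d}))) := by
  refine ⟨fun hmin => ⟨?_, ?_, ?_⟩, fun ⟨h1, h2, h3⟩ => ⟨hgf, fun C hC hgfC => ?_⟩⟩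
  · exact (isVC_imp_minimalVC_iff hL).2 fun C hC hCP => hmin.2 C hC (gapFree_iff.2 (.inl hCP))
  · rintro a d ⟨hdΔ, hdL⟩ -
    refine (isVC_imp_minimalVC_iff (Set.subset_sdiff_singleton hL hdL)).2 fun C hC hCH => ?_
    have hsafe := (safeAction_lawActions_iff hP).2 ⟨hdΔ, fun hdC => hdL (hC.subset hdC), hCH⟩
    exact hmin.2 C hC (gapFree_iff.2 (.inr ⟨a, d, hsafe⟩))
  · rintro a d ⟨hdΔ, hdL⟩ - ⟨-, hH⟩
    have hsafe := (safeAction_lawActions_iff hP).2 ⟨hdΔ, fun hd => hd.2 rfl, hH⟩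
    exact hmin.2 _ (Set.sdiff_singleton_ssubset.2 hdL) (gapFree_iff.2 (.inr ⟨a, d, hsafe⟩))
  rcases gapFree_iff.1 hgfC with hCP | ⟨a, d, hsafe⟩
  · exact (isVC_imp_minimalVC_iff hL).1 h1 C hC hCP
  obtain ⟨hdΔ, hdC, hCH⟩ := (safeAction_lawActions_iff hP).1 hsafe
  have hsafable : Safable Δ P d := ⟨C, hC.subset.trans hL, a, hsafe⟩
  by_cases hdL : d ∈ L
  · exact h3 a d ⟨hdΔ, hdL⟩ hsafable
      ⟨Set.sdiff_subset_sdiff_left hL, hCH.mono (Set.subset_sdiff_singleton hC.subset hdC)⟩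
  · exact (isVC_imp_minimalVC_iff (Set.subset_sdiff_singleton hL hdL)).1
      (h2 a d ⟨hdΔ, hdL⟩ hsafable) C hC hCH

/-- A gap-free law `L` in a game `(A, Δ, P)` is minimal if and
only if (1) if `L` is a vertex cover of `(⋃Δ, S(P))`, then `L` is a minimal
vertex cover of it; (2) for each agent `a ∈ A` and each safable action
`d ∈ Δ_a^L`, if `L` is a vertex cover of `H^{a,d}`, then `L` is a minimal vertex
cover of it; and (3) for each agent `a ∈ A` and each safable action
`d ∈ Δ_a ∩ L`, the set `L \ {d}` is not a vertex cover of `H^{a,d}`. -/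
theorem minimalGapFree_iff {A α : Type*} [Fintype A] [Nonempty A]
    (Δ : A → Set α) (P : Set (A → α))
    (hΔfin : ∀ a, (Δ a).Finite) (hP : P ⊆ Profiles Δ)
    (L : Set α) (hL : IsLaw Δ L) (hgf : GapFree Δ P L) :
    MinimalGapFree Δ P L ↔
      ((IsVC (⋃ a, Δ a) (suppSet P) L → MinimalVC (⋃ a, Δ a) (suppSet P) L) ∧
        (∀ a, ∀ d ∈ lawActions Δ L a, Safable Δ P d →
          IsVC (Hvertices Δ d) (Hedges P a d) L →
            MinimalVC (Hvertices Δ d) (Hedges P a d) L) ∧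
        (∀ a, ∀ d ∈ Δ a ∩ L, Safable Δ P d →
          ¬ IsVC (Hvertices Δ d) (Hedges P a d) (L \ {d}))) :=
  minimalGapFree_iff_general Δ P hP L hL hgf

end MAS
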